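/- arXiv:2004.05127 — 6 statements merged into one kernel-verified Lean document; each statement's English description precedes it below -/
import Mathlib

section
/- (Knight's identity.) For every τ ∈ (0,1) and all real numbers u and v, ρ_τ(u − v) − ρ_τ(u) = −v·ψ_τ(u) + ∫₀^v (1{u < s} − 1{u < 0}) ds, where the integral ∫₀^v is the signed Lebesgue integral from 0 to v (equal to minus the integral over [v,0] when v < 0). -/
/-!
Writing `ρ_τ(x) = τx + max(−x, 0)` and `∫ₐᵇ 1{u < s} ds = max(b, u) − max(a, u)`, both sides of
the identity reduce to `−τv + max(v, u) − max(0, u)`.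
-/

/-- The quantile regression check function `ρ_τ(u) = u(τ - 1{u < 0})`. -/
noncomputable def checkFn (τ u : ℝ) : ℝ := u * (τ - if u < 0 then 1 else 0)

/-- The quantile score function `ψ_τ(u) = τ - 1{u < 0}`. -/
noncomputable def scoreFn (τ u : ℝ) : ℝ := τ - if u < 0 then 1 else 0

open intervalIntegral Set

lemma checkFn_eq_mul_add_max (τ x : ℝ) : checkFn τ x = τ * x + max (-x) 0 := by
  unfold checkFn
  split_ifs with hx
  · rw [max_eq_left (by linarith)]; ring
  · rw [max_eq_right (by linarith)]; ring

lemma monotone_ite_lt (u : ℝ) : Monotone fun s : ℝ => if u < s then (1 : ℝ) else 0 := by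
  intro s t hst
  dsimp only
  split_ifs with hs ht <;> first | exact absurd (hs.trans_le hst) ht | norm_num

lemma integral_ite_lt_from (u b : ℝ) :
    ∫ s in u..b, (if u < s then (1 : ℝ) else 0) = max b u - u := by
  rcases le_total u b with hub | hbu
  · have : ∫ s in u..b, (if u < s then (1 : ℝ) else 0) = ∫ _ in u..b, (1 : ℝ) :=
      integral_congr_ae (.of_forall fun s hs =>
        if_pos (by rw [uIoc_of_le hub] at hs; exact hs.1))
    simp [this, max_eq_left hub]
  · have : ∫ s in u..b, (if u < s then (1 : ℝ) else 0) = ∫ _ in u..b, (0 : ℝ) :=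
      integral_congr_ae (.of_forall fun s hs =>
        if_neg (by rw [uIoc_of_ge hbu] at hs; exact not_lt.2 hs.2))
    simp [this, max_eq_right hbu]

lemma integral_ite_lt (u a b : ℝ) :
    ∫ s in a..b, (if u < s then (1 : ℝ) else 0) = max b u - max a u := by
  rw [← integral_interval_sub_left (monotone_ite_lt u).intervalIntegrable
    (monotone_ite_lt u).intervalIntegrable, integral_ite_lt_from, integral_ite_lt_from]
  ring

theorem knight_identity_general (τ : ℝ) (u v : ℝ) :
    checkFn τ (u - v) - checkFn τ u
      = -v * scoreFn τ u
        + ∫ s in (0 : ℝ)..v,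
            ((if u < s then (1 : ℝ) else 0) - (if u < 0 then (1 : ℝ) else 0)) := by
  have hv : max (v - u) 0 = max v u - u := by rw [← max_sub_sub_right, sub_self]
  have h0 : max (-u) 0 = max 0 u - u := by rw [← max_sub_sub_right, zero_sub, sub_self]
  rw [integral_sub (monotone_ite_lt u).intervalIntegrable intervalIntegrable_const,
    integral_ite_lt, integral_const, smul_eq_mul, checkFn_eq_mul_add_max,
    checkFn_eq_mul_add_max, neg_sub, hv, h0, scoreFn]
  ring

/-- Knight's identity: for every `τ ∈ (0,1)` and all reals `u, v`,
`ρ_τ(u − v) − ρ_τ(u) = −v·ψ_τ(u) + ∫₀^v (1{u < s} − 1{u < 0}) ds`,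
where the integral is the signed (interval) Lebesgue integral from `0` to `v`. -/
theorem knight_identity (τ : ℝ) (hτ : τ ∈ Set.Ioo (0 : ℝ) 1) (u v : ℝ) :
    checkFn τ (u - v) - checkFn τ u
      = -v * scoreFn τ u
        + ∫ s in (0 : ℝ)..v,
            ((if u < s then (1 : ℝ) else 0) - (if u < 0 then (1 : ℝ) else 0)) :=
  knight_identity_general τ u v
end

section
/- Fix τ ∈ (0,1), an integer N ≥ 1, responses y_1, …, y_N ∈ ℝ, and covariates for each observation i split as (X_i, x_{pi}) with X_i ∈ ℝ^{p−1} and x_{pi} ∈ ℝ. Let λ > 0 and suppose (â, b̂) ∈ ℝ^{p−1} × ℝ minimizes the penalized objective (a, b) ↦ Σ_{i=1}^N ρ_τ(y_i − X_i'a − b x_{pi}) + λ(‖a‖₁ + |b|) over ℝ^{p−1} × ℝ. If max{τ, 1−τ} · Σ_{i=1}^N |x_{pi}| < λ, then b̂ = 0. -/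
/-- `ρ_τ` is piecewise linear with slopes `τ` and `τ - 1`; since `τ + (1 - τ) = 1`, both are
bounded in absolute value by `max τ (1 - τ)` for every real `τ`. -/
theorem checkFn_sub_le (τ u v : ℝ) : checkFn τ u - checkFn τ v ≤ max τ (1 - τ) * |u - v| := by
  have hτ : τ ≤ max τ (1 - τ) := le_max_left _ _
  have hτ' : 1 - τ ≤ max τ (1 - τ) := le_max_right _ _
  unfold checkFn
  rcases abs_cases (u - v) with ⟨habs, _⟩ | ⟨habs, _⟩ <;> rw [habs] <;>
    split_ifs with hu hv hv <;> nlinarith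

theorem sum_checkFn_sub_le {ι : Type*} [Fintype ι] (τ : ℝ) (r x : ι → ℝ) (b : ℝ) :
    ∑ i, checkFn τ (r i) - ∑ i, checkFn τ (r i - b * x i)
      ≤ max τ (1 - τ) * |b| * ∑ i, |x i| := by
  rw [← Finset.sum_sub_distrib, Finset.mul_sum]
  refine Finset.sum_le_sum fun i _ => ?_
  calc checkFn τ (r i) - checkFn τ (r i - b * x i)
      ≤ max τ (1 - τ) * |r i - (r i - b * x i)| := checkFn_sub_le τ _ _
    _ = max τ (1 - τ) * |b| * |x i| := by rw [sub_sub_cancel, abs_mul, mul_assoc]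

theorem penalized_qr_zero_coef_general
    (τ : ℝ)
    (N d : ℕ)
    (y : Fin N → ℝ) (X : Fin N → Fin d → ℝ) (xp : Fin N → ℝ)
    (lam : ℝ)
    (ahat : Fin d → ℝ) (bhat : ℝ)
    (hmin : ∀ (a : Fin d → ℝ) (b : ℝ),
      (∑ i, checkFn τ (y i - ∑ j, X i j * ahat j - bhat * xp i))
          + lam * ((∑ j, |ahat j|) + |bhat|)
        ≤ (∑ i, checkFn τ (y i - ∑ j, X i j * a j - b * xp i))
            + lam * ((∑ j, |a j|) + |b|))
    (hbound : max τ (1 - τ) * ∑ i, |xp i| < lam) :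
    bhat = 0 := by
  by_contra hb
  have hzero := hmin ahat 0
  simp only [zero_mul, sub_zero, abs_zero, add_zero] at hzero
  have hloss := sum_checkFn_sub_le τ (fun i => y i - ∑ j, X i j * ahat j) xp bhat
  have hpenalty : max τ (1 - τ) * |bhat| * ∑ i, |xp i| < lam * |bhat| := by
    rw [mul_right_comm]
    exact mul_lt_mul_of_pos_right hbound (abs_pos.mpr hb)
  linarith

/-- If `(â, b̂)` minimizes the ℓ₁-penalized quantile regression objective
`(a, b) ↦ Σᵢ ρ_τ(yᵢ − Xᵢ'a − b·x_{pi}) + λ(‖a‖₁ + |b|)` and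
`max {τ, 1−τ} · Σᵢ |x_{pi}| < λ`, then `b̂ = 0`. -/
theorem penalized_qr_zero_coef
    (τ : ℝ) (hτ : τ ∈ Set.Ioo (0 : ℝ) 1)
    (N d : ℕ) (hN : 1 ≤ N)
    (y : Fin N → ℝ) (X : Fin N → Fin d → ℝ) (xp : Fin N → ℝ)
    (lam : ℝ) (hlam : 0 < lam)
    (ahat : Fin d → ℝ) (bhat : ℝ)
    (hmin : ∀ (a : Fin d → ℝ) (b : ℝ),
      (∑ i, checkFn τ (y i - ∑ j, X i j * ahat j - bhat * xp i))
          + lam * ((∑ j, |ahat j|) + |bhat|)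
        ≤ (∑ i, checkFn τ (y i - ∑ j, X i j * a j - b * xp i))
            + lam * ((∑ j, |a j|) + |b|))
    (hbound : max τ (1 - τ) * ∑ i, |xp i| < lam) :
    bhat = 0 :=
  penalized_qr_zero_coef_general τ N d y X xp lam ahat bhat hmin hbound
end

section
/- Fix τ ∈ (0,1), integers N, T ≥ 1, responses y_{it} ∈ ℝ and covariates x_{it} ∈ ℝ^p for 1 ≤ i ≤ N, 1 ≤ t ≤ T, and a penalty level λ > 0. Suppose (β̂, α̂) ∈ ℝ^p × ℝ^N minimizes the penalized panel quantile regression objective (β, α) ↦ Σ_{i=1}^N Σ_{t=1}^T ρ_τ(y_{it} − x_{it}'β − α_i) + λ Σ_{i=1}^N |α_i|. If λ > max{τ, 1−τ} · T, then α̂_i = 0 for every i = 1, …, N. -/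
open scoped RealInnerProductSpace

/-!
Zeroing the effect `α̂ᵢ` alone changes only the `T` check-function terms of individual `i`;
since `ρ_τ` is `max {τ, 1 - τ}`-Lipschitz, the loss grows by at most `max {τ, 1 - τ} · T · |α̂ᵢ|`,
while the penalty drops by `λ |α̂ᵢ|`. For `λ > max {τ, 1 - τ} · T` this is a strict improvement
unless `α̂ᵢ = 0`.
-/

open Finset

theorem checkFn_eq_max (τ u : ℝ) : checkFn τ u = max (τ * u) ((τ - 1) * u) := by
  unfold checkFn
  rcases lt_or_ge u 0 with hu | hu
  · rw [if_pos hu, max_eq_right (by nlinarith)]; ring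
  · rw [if_neg (not_lt.2 hu), max_eq_left (by nlinarith)]; ring

theorem abs_checkFn_sub_checkFn_le (τ u v : ℝ) :
    |checkFn τ u - checkFn τ v| ≤ max |τ| |τ - 1| * |u - v| := by
  rw [checkFn_eq_max, checkFn_eq_max, max_mul_of_nonneg _ _ (abs_nonneg _)]
  calc _ ≤ max |τ * u - τ * v| |(τ - 1) * u - (τ - 1) * v| := abs_max_sub_max_le_max _ _ _ _
    _ = max (|τ| * |u - v|) (|τ - 1| * |u - v|) := by rw [← mul_sub, ← mul_sub, abs_mul, abs_mul]

theorem sum_checkFn_sub_sum_checkFn_sub_le {ι : Type*} [Fintype ι] (τ a : ℝ) (r : ι → ℝ) :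
    ∑ t, checkFn τ (r t) - ∑ t, checkFn τ (r t - a)
      ≤ Fintype.card ι * max |τ| |τ - 1| * |a| := by
  rw [← sum_sub_distrib, mul_assoc, ← nsmul_eq_mul, ← card_univ]
  refine sum_le_card_nsmul _ _ _ fun t _ => (le_abs_self _).trans ?_
  simpa using abs_checkFn_sub_checkFn_le τ (r t) (r t - a)

theorem le_of_sum_le_sum_update {ι α M : Type*} [Fintype ι] [DecidableEq ι]
    [AddCommMonoid M] [PartialOrder M] [IsOrderedCancelAddMonoid M]
    (φ : ι → α → M) (x : ι → α) (i : ι) (a : α)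
    (h : ∑ j, φ j (x j) ≤ ∑ j, φ j (Function.update x i a j)) : φ i (x i) ≤ φ i a := by
  rw [← add_sum_erase _ _ (mem_univ i), ← add_sum_erase _ _ (mem_univ i),
    Function.update_self] at h
  have hrest : ∑ j ∈ univ.erase i, φ j (Function.update x i a j) = ∑ j ∈ univ.erase i, φ j (x j) :=
    sum_congr rfl fun j hj => by rw [Function.update_of_ne (ne_of_mem_erase hj)]
  rwa [hrest, add_le_add_iff_right] at h

theorem eq_zero_of_add_mul_abs_le {g : ℝ → ℝ} {C lam a : ℝ} (hC : C < lam)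
    (hg : g 0 - g a ≤ C * |a|) (h : g a + lam * |a| ≤ g 0) : a = 0 := by
  have : (lam - C) * |a| ≤ 0 := by linarith
  exact abs_nonpos_iff.mp (nonpos_of_mul_nonpos_right this (sub_pos.2 hC))

theorem penalized_panel_qr_all_effects_zero_general
    (τ : ℝ) (hτ : τ ∈ Set.Ioo (0 : ℝ) 1)
    (p N T : ℕ)
    (y : Fin N → Fin T → ℝ) (x : Fin N → Fin T → EuclideanSpace ℝ (Fin p))
    (lam : ℝ)
    (βhat : EuclideanSpace ℝ (Fin p)) (αhat : Fin N → ℝ)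
    (hmin : ∀ (β : EuclideanSpace ℝ (Fin p)) (α : Fin N → ℝ),
      (∑ i, ∑ t, checkFn τ (y i t - ⟪x i t, βhat⟫ - αhat i)) + lam * ∑ i, |αhat i|
        ≤ (∑ i, ∑ t, checkFn τ (y i t - ⟪x i t, β⟫ - α i)) + lam * ∑ i, |α i|)
    (hbound : max τ (1 - τ) * (T : ℝ) < lam) :
    ∀ i, αhat i = 0 := by
  intro i
  have hlip : max |τ| |τ - 1| = max τ (1 - τ) := by
    rw [abs_of_pos hτ.1, abs_sub_comm, abs_of_pos (sub_pos.2 hτ.2)]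
  have hopt := hmin βhat (Function.update αhat i 0)
  simp only [mul_sum, ← sum_add_distrib] at hopt
  have hcoord := le_of_sum_le_sum_update
    (fun j a => ∑ t, checkFn τ (y j t - ⟪x j t, βhat⟫ - a) + lam * |a|) αhat i 0 hopt
  refine eq_zero_of_add_mul_abs_le (g := fun a => ∑ t, checkFn τ (y i t - ⟪x i t, βhat⟫ - a))
    (C := T * max τ (1 - τ)) (by rwa [mul_comm]) ?_ (by simpa using hcoord)
  simpa [hlip] using sum_checkFn_sub_sum_checkFn_sub_le τ (αhat i) (fun t => y i t - ⟪x i t, βhat⟫)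

/-- If `(β̂, α̂)` minimizes the penalized panel quantile regression objective
`(β, α) ↦ Σᵢ Σₜ ρ_τ(y_{it} − x_{it}'β − αᵢ) + λ Σᵢ |αᵢ|` and
`λ > max {τ, 1−τ} · T`, then all the estimated individual effects are zero. -/
theorem penalized_panel_qr_all_effects_zero
    (τ : ℝ) (hτ : τ ∈ Set.Ioo (0 : ℝ) 1)
    (p N T : ℕ) (hN : 1 ≤ N) (hT : 1 ≤ T)
    (y : Fin N → Fin T → ℝ) (x : Fin N → Fin T → EuclideanSpace ℝ (Fin p))
    (lam : ℝ) (hlam : 0 < lam)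
    (βhat : EuclideanSpace ℝ (Fin p)) (αhat : Fin N → ℝ)
    (hmin : ∀ (β : EuclideanSpace ℝ (Fin p)) (α : Fin N → ℝ),
      (∑ i, ∑ t, checkFn τ (y i t - ⟪x i t, βhat⟫ - αhat i)) + lam * ∑ i, |αhat i|
        ≤ (∑ i, ∑ t, checkFn τ (y i t - ⟪x i t, β⟫ - α i)) + lam * ∑ i, |α i|)
    (hbound : max τ (1 - τ) * (T : ℝ) < lam) :
    ∀ i, αhat i = 0 :=
  penalized_panel_qr_all_effects_zero_general τ hτ p N T y x lam βhat αhat hmin hbound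
end

section
/- Let U be a real random variable with an absolutely continuous distribution whose Lebesgue density f is bounded and continuous at 0, and let W be a real random variable independent of U whose distribution μ satisfies: (i) μ is supported in (−∞, −c₁] ∪ [c₂, ∞) for some constants c₁ > 0, c₂ > 0; and (ii) ∫_{(0,∞)} w^{−1} dμ(w) = 1/2 and ∫_{(−∞,0)} w^{−1} dμ(w) = −1/2. Fix τ ∈ (0,1). Then, as the real number a → 0, E[ ∫₀^a ( ψ_τ(W|U| − s) − ψ_τ(W|U|) ) ds ] = −(f(0)/2)·a² + o(a²), where ∫₀^a denotes the signed Lebesgue integral from 0 to a. -/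
/-!
Write `T = W|U|` and `F s = P(T < s)`. The score increment is `1{T < 0} - 1{T < s}`, so by
Fubini the expectation is `∫₀^a (F 0 - F s) ds`, and it suffices that `F' (0) = f 0`.
Given `W = w ≠ 0`, the increment `P(w|U| < s) - P(w|U| < 0)` is `sign w · K (s / w)` with
`K t = P(|U| < t) = 2 f(0) t⁺ + o(t)`. As `|W|` is bounded below, `s / W` is uniformly small,
and the reciprocal moments `±1/2` give `E[sign W · 2 f(0) (s / W)⁺] = f(0) s`, with an error at
most `ε |s| E|W|⁻¹ = ε |s|`.
-/

open MeasureTheory ProbabilityTheory Filter Asymptotics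

open Set Topology

lemma scoreFn_sub_scoreFn (τ t s : ℝ) :
    scoreFn τ (t - s) - scoreFn τ t = (if t < 0 then 1 else 0) - if t < s then 1 else 0 := by
  simp only [scoreFn, sub_neg]
  ring

section Expectation

variable {Ω : Type*} [MeasurableSpace Ω] {μ : Measure Ω} {T : Ω → ℝ}

lemma integrable_ite_lt [IsFiniteMeasure μ] (hT : Measurable T) (s : ℝ) :
    Integrable (fun ω => if T ω < s then (1 : ℝ) else 0) μ :=
  .of_bound (Measurable.ite (measurableSet_lt hT measurable_const) measurable_const
    measurable_const).aestronglyMeasurable 1 (.of_forall fun ω => by split_ifs <;> norm_num)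

lemma integral_ite_lt_s8 (hT : Measurable T) (s : ℝ) :
    ∫ ω, (if T ω < s then (1 : ℝ) else 0) ∂μ = μ.real {ω | T ω < s} := by
  rw [← integral_indicator_one (measurableSet_lt hT measurable_const)]
  rfl

lemma integral_intervalIntegral_scoreFn_sub [IsFiniteMeasure μ] (hT : Measurable T) (τ a : ℝ) :
    ∫ ω, (∫ s in (0 : ℝ)..a, (scoreFn τ (T ω - s) - scoreFn τ (T ω))) ∂μ
      = ∫ s in (0 : ℝ)..a, (μ.real {ω | T ω < 0} - μ.real {ω | T ω < s}) := by
  have hmeas : Measurable (Function.uncurry fun (s : ℝ) (ω : Ω) =>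
      (if T ω < 0 then (1 : ℝ) else 0) - if T ω < s then 1 else 0) :=
    (Measurable.ite (measurableSet_lt (hT.comp measurable_snd) measurable_const)
      measurable_const measurable_const).sub
    (Measurable.ite (measurableSet_lt (hT.comp measurable_snd) measurable_fst)
      measurable_const measurable_const)
  have : IsFiniteMeasure (volume.restrict (uIoc 0 a)) := by rw [uIoc]; infer_instance
  have hint : Integrable (Function.uncurry fun (s : ℝ) (ω : Ω) =>
      (if T ω < 0 then (1 : ℝ) else 0) - if T ω < s then 1 else 0)
      ((volume.restrict (uIoc 0 a)).prod μ) :=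
    .of_bound hmeas.aestronglyMeasurable 1 (.of_forall fun p => by
      simp only [Function.uncurry]
      split_ifs <;> norm_num)
  simp_rw [scoreFn_sub_scoreFn]
  rw [← intervalIntegral_integral_swap hint]
  congr 1 with s
  rw [integral_sub (integrable_ite_lt hT 0) (integrable_ite_lt hT s), integral_ite_lt_s8 hT,
    integral_ite_lt_s8 hT]

end Expectation

lemma HasDerivAt.isLittleO_intervalIntegral_sub_add {F : ℝ → ℝ} {L : ℝ}
    (hF : HasDerivAt F L 0) (hint : ∀ a, IntervalIntegrable F volume 0 a) :
    (fun a => (∫ s in (0 : ℝ)..a, (F 0 - F s)) + L / 2 * a ^ 2) =o[𝓝 0] fun a => a ^ 2 := by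
  rw [isLittleO_iff]
  intro ε hε
  have hlin := (hasDerivAt_iff_isLittleO_nhds_zero.mp hF).def hε
  simp only [zero_add, smul_eq_mul] at hlin
  obtain ⟨δ, hδ, hball⟩ := Metric.eventually_nhds_iff_ball.mp hlin
  filter_upwards [Metric.ball_mem_nhds 0 hδ] with a ha
  have hsub : (∫ s in (0 : ℝ)..a, (F 0 - F s)) + L / 2 * a ^ 2
      = ∫ s in (0 : ℝ)..a, -(F s - F 0 - s * L) := by
    rw [intervalIntegral.integral_neg, intervalIntegral.integral_sub
      ((hint a).sub intervalIntegrable_const)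
      (intervalIntegral.intervalIntegrable_id.mul_const L), intervalIntegral.integral_mul_const,
      integral_id, intervalIntegral.integral_sub intervalIntegrable_const (hint a),
      intervalIntegral.integral_sub (hint a) intervalIntegrable_const]
    ring
  have hbound : ∀ s ∈ uIoc (0 : ℝ) a, ‖-(F s - F 0 - s * L)‖ ≤ ε * |a| := by
    intro s hs
    have hsa : |s| ≤ |a| := by simpa using abs_sub_left_of_mem_uIcc (uIoc_subset_uIcc hs)
    rw [norm_neg]
    calc ‖F s - F 0 - s * L‖ ≤ ε * ‖s‖ := hball s (by
          simpa [Real.dist_eq] using hsa.trans_lt (by simpa [Real.dist_eq] using ha))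
      _ ≤ ε * |a| := by rw [Real.norm_eq_abs]; gcongr
  rw [hsub, norm_pow, Real.norm_eq_abs]
  calc _ ≤ ε * |a| * |a - 0| := intervalIntegral.norm_integral_le_of_norm_le_const hbound
    _ = ε * |a| ^ 2 := by rw [sub_zero]; ring

section Density

variable {μ : Measure ℝ} {f : ℝ → ℝ}

lemma measureReal_Ioo_le_of_withDensity
    (hμ : μ = volume.withDensity fun x => ENNReal.ofReal (f x)) {a b M : ℝ} (hab : a ≤ b)
    (hM : 0 ≤ M) (hf : ∀ x ∈ Ioo a b, f x ≤ M) :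
    μ.real (Ioo a b) ≤ M * (b - a) := by
  refine ENNReal.toReal_le_of_le_ofReal (by nlinarith) ?_
  rw [hμ, withDensity_apply _ measurableSet_Ioo, ENNReal.ofReal_mul hM, ← Real.volume_Ioo,
    ← setLIntegral_const]
  exact setLIntegral_mono' measurableSet_Ioo fun x hx => ENNReal.ofReal_le_ofReal (hf x hx)

lemma le_measureReal_Ioo_of_withDensity [IsFiniteMeasure μ]
    (hμ : μ = volume.withDensity fun x => ENNReal.ofReal (f x)) {a b m : ℝ} (hab : a ≤ b)
    (hf : ∀ x ∈ Ioo a b, m ≤ f x) :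
    m * (b - a) ≤ μ.real (Ioo a b) := by
  rcases le_total m 0 with hm | hm
  · exact (mul_nonpos_of_nonpos_of_nonneg hm (sub_nonneg.mpr hab)).trans measureReal_nonneg
  refine (ENNReal.ofReal_le_iff_le_toReal (measure_ne_top μ _)).mp ?_
  rw [hμ, withDensity_apply _ measurableSet_Ioo, ENNReal.ofReal_mul hm, ← Real.volume_Ioo,
    ← setLIntegral_const]
  exact setLIntegral_mono' measurableSet_Ioo fun x hx => ENNReal.ofReal_le_ofReal (hf x hx)

lemma measureReal_abs_lt_sub_isLittleO [IsFiniteMeasure μ]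
    (hμ : μ = volume.withDensity fun x => ENNReal.ofReal (f x)) (hf₀ : 0 ≤ f 0)
    (hf : ContinuousAt f 0) :
    (fun t => μ.real {u | |u| < t} - 2 * f 0 * max t 0) =o[𝓝 0] id := by
  rw [isLittleO_iff]
  intro ε hε
  obtain ⟨δ, hδ, hfδ⟩ := Metric.continuousAt_iff.mp hf (ε / 2) (half_pos hε)
  filter_upwards [Metric.ball_mem_nhds 0 hδ] with t ht
  rcases le_or_gt t 0 with ht0 | ht0
  · have : {u : ℝ | |u| < t} = ∅ := eq_empty_of_forall_notMem fun u hu =>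
      (abs_nonneg u).not_gt (hu.trans_le ht0)
    simp only [this, measureReal_empty, max_eq_right ht0, mul_zero, sub_zero, norm_zero]
    positivity
  have hset : {u : ℝ | |u| < t} = Ioo (-t) t := by ext u; simp [abs_lt]
  have hclose : ∀ x ∈ Ioo (-t) t, |f x - f 0| < ε / 2 := fun x hx => by
    have : |x| < δ := by
      rw [Metric.mem_ball, Real.dist_eq, sub_zero] at ht
      exact (abs_lt.mpr hx).trans (lt_of_abs_lt ht)
    simpa [Real.dist_eq] using hfδ (by simpa [Real.dist_eq] using this)
  have hup := measureReal_Ioo_le_of_withDensity hμ (a := -t) (b := t) (M := f 0 + ε / 2)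
    (by linarith) (by positivity) fun x hx => by linarith [(abs_lt.mp (hclose x hx)).2]
  have hlow := le_measureReal_Ioo_of_withDensity hμ (a := -t) (b := t) (m := f 0 - ε / 2)
    (by linarith) fun x hx => by linarith [(abs_lt.mp (hclose x hx)).1]
  rw [← hset] at hup hlow
  rw [max_eq_left ht0.le, Real.norm_eq_abs, Real.norm_eq_abs, id, abs_of_pos ht0, abs_le]
  constructor <;> nlinarith

end Density

lemma sign_mul_max_div_eq (s w : ℝ) :
    Real.sign w * max (s / w) 0 = (Ioi 0).indicator (fun w => max s 0 * w⁻¹) w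
      - (Iio 0).indicator (fun w => min s 0 * w⁻¹) w := by
  rcases lt_trichotomy w 0 with hw | rfl | hw
  · simp only [Real.sign_of_neg hw, indicator_of_notMem (show w ∉ Ioi 0 from hw.not_gt),
      indicator_of_mem (show w ∈ Iio 0 from hw)]
    rcases le_total s 0 with hs | hs
    · rw [max_eq_left (div_nonneg_of_nonpos hs hw.le), min_eq_left hs, div_eq_mul_inv]; ring
    · rw [max_eq_right (div_nonpos_of_nonneg_of_nonpos hs hw.le), min_eq_right hs]; ring
  · simp
  · simp only [Real.sign_of_pos hw, indicator_of_notMem (show w ∉ Iio 0 from hw.not_gt),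
      indicator_of_mem (show w ∈ Ioi 0 from hw)]
    rcases le_total s 0 with hs | hs
    · rw [max_eq_right (div_nonpos_of_nonpos_of_nonneg hs hw.le), max_eq_right hs]; ring
    · rw [max_eq_left (div_nonneg hs hw.le), max_eq_left hs, div_eq_mul_inv]; ring

lemma abs_inv_eq (w : ℝ) :
    |w|⁻¹ = (Ioi 0).indicator (fun w => 1 * w⁻¹) w - (Iio 0).indicator (fun w => 1 * w⁻¹) w := by
  rcases lt_trichotomy w 0 with hw | rfl | hw
  · simp [indicator_of_notMem (show w ∉ Ioi 0 from hw.not_gt), hw, abs_of_neg hw]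
  · simp
  · simp [indicator_of_notMem (show w ∉ Iio 0 from hw.not_gt), hw, abs_of_pos hw]

section ReciprocalMoments

variable {μW : Measure ℝ}

lemma integrable_indicator_mul_inv {S : Set ℝ} (hS : MeasurableSet S)
    (h : ∫ w in S, w⁻¹ ∂μW ≠ 0) (a : ℝ) :
    Integrable (S.indicator fun w => a * w⁻¹) μW :=
  (integrable_indicator_iff hS).mpr ((Integrable.of_integral_ne_zero h).const_mul a)

lemma integrable_indicator_inv_sub (hpos : ∫ w in Ioi (0 : ℝ), w⁻¹ ∂μW = 1 / 2)
    (hneg : ∫ w in Iio (0 : ℝ), w⁻¹ ∂μW = -(1 / 2)) (a b : ℝ) :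
    Integrable (fun w => (Ioi 0).indicator (fun w => a * w⁻¹) w
      - (Iio 0).indicator (fun w => b * w⁻¹) w) μW :=
  (integrable_indicator_mul_inv measurableSet_Ioi (by rw [hpos]; norm_num) a).sub
    (integrable_indicator_mul_inv measurableSet_Iio (by rw [hneg]; norm_num) b)

lemma integral_indicator_inv_sub (hpos : ∫ w in Ioi (0 : ℝ), w⁻¹ ∂μW = 1 / 2)
    (hneg : ∫ w in Iio (0 : ℝ), w⁻¹ ∂μW = -(1 / 2)) (a b : ℝ) :
    ∫ w, ((Ioi 0).indicator (fun w => a * w⁻¹) w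
      - (Iio 0).indicator (fun w => b * w⁻¹) w) ∂μW = (a + b) / 2 := by
  rw [integral_sub (integrable_indicator_mul_inv measurableSet_Ioi (by rw [hpos]; norm_num) a)
    (integrable_indicator_mul_inv measurableSet_Iio (by rw [hneg]; norm_num) b),
    integral_indicator measurableSet_Ioi, integral_indicator measurableSet_Iio,
    integral_const_mul, integral_const_mul, hpos, hneg]
  ring

lemma integrable_sign_mul_max_div (hpos : ∫ w in Ioi (0 : ℝ), w⁻¹ ∂μW = 1 / 2)
    (hneg : ∫ w in Iio (0 : ℝ), w⁻¹ ∂μW = -(1 / 2)) (s : ℝ) :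
    Integrable (fun w => Real.sign w * max (s / w) 0) μW := by
  simp_rw [sign_mul_max_div_eq]
  exact integrable_indicator_inv_sub hpos hneg _ _

lemma integral_sign_mul_max_div (hpos : ∫ w in Ioi (0 : ℝ), w⁻¹ ∂μW = 1 / 2)
    (hneg : ∫ w in Iio (0 : ℝ), w⁻¹ ∂μW = -(1 / 2)) (s : ℝ) :
    ∫ w, Real.sign w * max (s / w) 0 ∂μW = s / 2 := by
  simp_rw [sign_mul_max_div_eq]
  rw [integral_indicator_inv_sub hpos hneg, max_add_min, add_zero]

lemma integrable_abs_inv (hpos : ∫ w in Ioi (0 : ℝ), w⁻¹ ∂μW = 1 / 2)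
    (hneg : ∫ w in Iio (0 : ℝ), w⁻¹ ∂μW = -(1 / 2)) :
    Integrable (fun w => |w|⁻¹) μW := by
  simp_rw [abs_inv_eq]
  exact integrable_indicator_inv_sub hpos hneg _ _

lemma integral_abs_inv (hpos : ∫ w in Ioi (0 : ℝ), w⁻¹ ∂μW = 1 / 2)
    (hneg : ∫ w in Iio (0 : ℝ), w⁻¹ ∂μW = -(1 / 2)) :
    ∫ w, |w|⁻¹ ∂μW = 1 := by
  simp_rw [abs_inv_eq]
  rw [integral_indicator_inv_sub hpos hneg]
  norm_num

end ReciprocalMoments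

section Slices

variable {μU : Measure ℝ}

lemma measureReal_abs_le_eq_abs_lt [NullSingletonClass μU] (t : ℝ) :
    μU.real {u | |u| ≤ t} = μU.real {u | |u| < t} := by
  have hle : {u : ℝ | |u| ≤ t} = Icc (-t) t := by ext u; simp [abs_le]
  have hlt : {u : ℝ | |u| < t} = Ioo (-t) t := by ext u; simp [abs_lt]
  rw [hle, hlt]
  exact measureReal_congr Ioo_ae_eq_Icc.symm

variable [IsProbabilityMeasure μU] [NullSingletonClass μU]

lemma measureReal_mul_abs_lt_sub {w : ℝ} (hw : w ≠ 0) (s : ℝ) :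
    μU.real {u | w * |u| < s} - μU.real {u | w * |u| < 0}
      = Real.sign w * μU.real {u | |u| < s / w} := by
  rcases hw.lt_or_gt with hw | hw
  · have hcompl : ∀ r, {u : ℝ | w * |u| < r} = {u | |u| ≤ r / w}ᶜ := fun r => by
      ext u; simp [le_div_iff_of_neg hw, mul_comm]
    have hmeas : ∀ r, MeasurableSet {u : ℝ | |u| ≤ r} := fun r =>
      measurableSet_le measurable_abs measurable_const
    have hempty : {u : ℝ | |u| < 0} = ∅ := eq_empty_of_forall_notMem fun u hu =>
      (abs_nonneg u).not_gt hu
    rw [hcompl, hcompl, measureReal_compl (hmeas _), measureReal_compl (hmeas _), zero_div,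
      measureReal_abs_le_eq_abs_lt, measureReal_abs_le_eq_abs_lt, hempty, measureReal_empty,
      Real.sign_of_neg hw]
    ring
  · have hdiv : {u : ℝ | w * |u| < s} = {u | |u| < s / w} := by
      ext u; simp [lt_div_iff₀ hw, mul_comm]
    have hempty : {u : ℝ | w * |u| < 0} = ∅ := eq_empty_of_forall_notMem fun u hu =>
      (mul_nonneg hw.le (abs_nonneg u)).not_gt hu
    rw [hdiv, hempty, measureReal_empty, Real.sign_of_pos hw]
    ring

lemma norm_measureReal_mul_abs_lt_sub_sub_le {L ε δ : ℝ}
    (hK : ∀ t, |t| < δ → ‖μU.real {u | |u| < t} - 2 * L * max t 0‖ ≤ ε * |t|)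
    {w s : ℝ} (hw : w ≠ 0) (hsw : |s / w| < δ) :
    ‖μU.real {u | w * |u| < s} - μU.real {u | w * |u| < 0}
      - 2 * L * (Real.sign w * max (s / w) 0)‖ ≤ ε * |s| * |w|⁻¹ := by
  have hsign : |Real.sign w| ≤ 1 := by
    rcases Real.sign_apply_eq w with h | h | h <;> simp [h]
  rw [measureReal_mul_abs_lt_sub hw, ← mul_assoc, mul_comm _ (Real.sign w), mul_assoc, ← mul_sub,
    norm_mul, Real.norm_eq_abs]
  calc |Real.sign w| * ‖μU.real {u | |u| < s / w} - 2 * L * max (s / w) 0‖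
      ≤ 1 * (ε * |s / w|) := mul_le_mul hsign (hK _ hsw) (norm_nonneg _) zero_le_one
    _ = ε * |s| * |w|⁻¹ := by rw [one_mul, abs_div, div_eq_mul_inv, mul_assoc]

end Slices

lemma prod_measureReal_eq_integral {μW μU : Measure ℝ} [IsFiniteMeasure μW]
    [IsFiniteMeasure μU] {A : Set (ℝ × ℝ)} (hA : MeasurableSet A) :
    (μW.prod μU).real A = ∫ w, μU.real (Prod.mk w ⁻¹' A) ∂μW := by
  rw [measureReal_def, Measure.prod_apply hA]
  exact (integral_toReal (measurable_measure_prodMk_left hA).aemeasurable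
    (.of_forall fun _ => measure_lt_top _ _)).symm

theorem hasDerivAt_prod_measureReal_mul_abs_lt {μW μU : Measure ℝ} [IsProbabilityMeasure μW]
    [IsProbabilityMeasure μU] [NullSingletonClass μU] {L c : ℝ}
    (hK : (fun t => μU.real {u | |u| < t} - 2 * L * max t 0) =o[𝓝 0] id)
    (hc : 0 < c) (haway : ∀ᵐ w ∂μW, c ≤ |w|)
    (hpos : ∫ w in Ioi (0 : ℝ), w⁻¹ ∂μW = 1 / 2)
    (hneg : ∫ w in Iio (0 : ℝ), w⁻¹ ∂μW = -(1 / 2)) :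
    HasDerivAt (fun s => (μW.prod μU).real {p | p.1 * |p.2| < s}) L 0 := by
  rw [hasDerivAt_iff_isLittleO_nhds_zero, isLittleO_iff]
  intro ε hε
  obtain ⟨δ, hδ, hKδ⟩ := Metric.eventually_nhds_iff_ball.mp (isLittleO_iff.mp hK hε)
  filter_upwards [Metric.ball_mem_nhds 0 (mul_pos hδ hc)] with s hs
  rw [Metric.mem_ball, dist_zero_right, Real.norm_eq_abs] at hs
  have hmeas : ∀ r : ℝ, MeasurableSet {p : ℝ × ℝ | p.1 * |p.2| < r} := fun r =>
    measurableSet_lt (measurable_fst.mul measurable_snd.abs) measurable_const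
  have hF : ∀ r, (μW.prod μU).real {p | p.1 * |p.2| < r}
      = ∫ w, μU.real {u | w * |u| < r} ∂μW := fun r => prod_measureReal_eq_integral (hmeas r)
  have hslice_int : ∀ r, Integrable (fun w => μU.real {u | w * |u| < r}) μW := fun r =>
    .of_bound (measurable_measure_prodMk_left (hmeas r)).ennreal_toReal.aestronglyMeasurable
      1 (.of_forall fun w => by simp [Real.norm_eq_abs, abs_of_nonneg measureReal_nonneg])
  have hlin : ∫ w, 2 * L * (Real.sign w * max (s / w) 0) ∂μW = s * L := by
    rw [integral_const_mul, integral_sign_mul_max_div hpos hneg]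
    ring
  have herr : ∫ w, ε * |s| * |w|⁻¹ ∂μW = ε * ‖s‖ := by
    rw [integral_const_mul, integral_abs_inv hpos hneg, Real.norm_eq_abs, mul_one]
  have hbound : ∀ᵐ w ∂μW, ‖μU.real {u | w * |u| < s} - μU.real {u | w * |u| < 0}
      - 2 * L * (Real.sign w * max (s / w) 0)‖ ≤ ε * |s| * |w|⁻¹ := by
    filter_upwards [haway] with w hw
    have hw0 : 0 < |w| := hc.trans_le hw
    refine norm_measureReal_mul_abs_lt_sub_sub_le (δ := δ) (fun t ht => ?_) (abs_pos.mp hw0) ?_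
    · simpa using hKδ t (by rwa [Metric.mem_ball, dist_zero_right, Real.norm_eq_abs])
    · rw [abs_div, div_lt_iff₀ hw0]
      nlinarith
  rw [zero_add, hF, hF, smul_eq_mul, ← hlin,
    ← integral_sub (hslice_int s) (hslice_int 0),
    ← integral_sub (by exact (hslice_int s).sub (hslice_int 0))
      ((integrable_sign_mul_max_div hpos hneg s).const_mul _), ← herr]
  exact norm_integral_le_of_norm_le ((integrable_abs_inv hpos hneg).const_mul _) hbound

theorem wild_bootstrap_expansion_integrated_general
    {Ω : Type*} [MeasurableSpace Ω] (μ : Measure Ω) [IsProbabilityMeasure μ]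
    (τ : ℝ)
    (U W : Ω → ℝ) (hU : Measurable U) (hW : Measurable W)
    (hindep : IndepFun U W μ)
    (f : ℝ → ℝ) (hf_nonneg : ∀ x, 0 ≤ f x)
    (hf_density : Measure.map U μ
      = MeasureTheory.volume.withDensity (fun x => ENNReal.ofReal (f x)))
    (hf_cont : ContinuousAt f 0)
    (c₁ c₂ : ℝ) (hc₁ : 0 < c₁) (hc₂ : 0 < c₂)
    (hsupp : Measure.map W μ (Set.Ioo (-c₁) c₂) = 0)
    (hpos : ∫ w in Set.Ioi (0 : ℝ), w⁻¹ ∂(Measure.map W μ) = 1 / 2)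
    (hneg : ∫ w in Set.Iio (0 : ℝ), w⁻¹ ∂(Measure.map W μ) = -(1 / 2)) :
    (fun a : ℝ =>
        (∫ ω, (∫ s in (0 : ℝ)..a,
            (scoreFn τ (W ω * |U ω| - s) - scoreFn τ (W ω * |U ω|))) ∂μ)
          + f 0 / 2 * a ^ 2)
      =o[nhds (0 : ℝ)] (fun a => a ^ 2) := by
  have : IsProbabilityMeasure (μ.map U) := Measure.isProbabilityMeasure_map hU.aemeasurable
  have : IsProbabilityMeasure (μ.map W) := Measure.isProbabilityMeasure_map hW.aemeasurable
  have : NullSingletonClass (μ.map U) := by rw [hf_density]; infer_instance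
  have hlaw : ∀ s, μ.real {ω | W ω * |U ω| < s}
      = ((μ.map W).prod (μ.map U)).real {p | p.1 * |p.2| < s} := fun s => by
    rw [← (indepFun_iff_map_prod_eq_prod_map_map hW.aemeasurable hU.aemeasurable).mp
      hindep.symm, map_measureReal_apply (hW.prodMk hU) (show MeasurableSet {p : ℝ × ℝ |
        p.1 * |p.2| < s} from measurableSet_lt (measurable_fst.mul measurable_snd.abs)
        measurable_const)]
    rfl
  have haway : ∀ᵐ w ∂(μ.map W), min c₁ c₂ ≤ |w| := by
    filter_upwards [measure_eq_zero_iff_ae_notMem.mp hsupp] with w hw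
    by_contra! h
    obtain ⟨h₁, h₂⟩ := abs_lt.mp h
    exact hw ⟨by linarith [min_le_left c₁ c₂], by linarith [min_le_right c₁ c₂]⟩
  have hderiv : HasDerivAt (fun s => μ.real {ω | W ω * |U ω| < s}) (f 0) 0 := by
    simp_rw [hlaw]
    exact hasDerivAt_prod_measureReal_mul_abs_lt
      (measureReal_abs_lt_sub_isLittleO hf_density (hf_nonneg 0) hf_cont)
      (lt_min hc₁ hc₂) haway hpos hneg
  have hmono : Monotone fun s => μ.real {ω | W ω * |U ω| < s} := fun s t hst =>
    measureReal_mono fun ω (h : _ < s) => h.trans_le hst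
  refine (hderiv.isLittleO_intervalIntegral_sub_add fun a => hmono.intervalIntegrable).congr_left
    fun a => ?_
  rw [integral_intervalIntegral_scoreFn_sub (T := fun ω => W ω * |U ω|) (hW.mul hU.abs)]

/-- Second-order expansion of the expected integrated wild-bootstrap score increment
(part 1 of Lemma S.3): if `U` has a bounded density `f` continuous at `0`, `W` is
independent of `U` with distribution supported away from `0` whose signed reciprocal
moments on the two half-lines are `±1/2`, then as `a → 0`,
`E[∫₀^a (ψ_τ(W|U| − s) − ψ_τ(W|U|)) ds] = −(f(0)/2)·a² + o(a²)`. -/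
theorem wild_bootstrap_expansion_integrated
    {Ω : Type*} [MeasurableSpace Ω] (μ : Measure Ω) [IsProbabilityMeasure μ]
    (τ : ℝ) (hτ : τ ∈ Set.Ioo (0 : ℝ) 1)
    (U W : Ω → ℝ) (hU : Measurable U) (hW : Measurable W)
    (hindep : IndepFun U W μ)
    (f : ℝ → ℝ) (hf_nonneg : ∀ x, 0 ≤ f x)
    (hf_density : Measure.map U μ
      = MeasureTheory.volume.withDensity (fun x => ENNReal.ofReal (f x)))
    (hf_bdd : ∃ C : ℝ, ∀ x, f x ≤ C)
    (hf_cont : ContinuousAt f 0)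
    (c₁ c₂ : ℝ) (hc₁ : 0 < c₁) (hc₂ : 0 < c₂)
    (hsupp : Measure.map W μ (Set.Ioo (-c₁) c₂) = 0)
    (hpos : ∫ w in Set.Ioi (0 : ℝ), w⁻¹ ∂(Measure.map W μ) = 1 / 2)
    (hneg : ∫ w in Set.Iio (0 : ℝ), w⁻¹ ∂(Measure.map W μ) = -(1 / 2)) :
    (fun a : ℝ =>
        (∫ ω, (∫ s in (0 : ℝ)..a,
            (scoreFn τ (W ω * |U ω| - s) - scoreFn τ (W ω * |U ω|))) ∂μ)
          + f 0 / 2 * a ^ 2)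
      =o[nhds (0 : ℝ)] (fun a => a ^ 2) :=
  wild_bootstrap_expansion_integrated_general μ τ U W hU hW hindep f hf_nonneg hf_density hf_cont c₁
    c₂ hc₁ hc₂ hsupp hpos hneg
end

section
/- Let U be a real random variable with an absolutely continuous distribution whose Lebesgue density f is bounded, Lipschitz continuous in a neighborhood of 0, and bounded away from 0 near 0, and let W be a real random variable independent of U whose distribution μ satisfies: (i) μ is supported in (−∞, −c₁] ∪ [c₂, ∞) for some constants c₁ > 0, c₂ > 0; and (ii) ∫_{(0,∞)} w^{−1} dμ(w) = 1/2 and ∫_{(−∞,0)} w^{−1} dμ(w) = −1/2. Fix τ ∈ (0,1). Then, as (a, b) → (0, 0) in ℝ², E[ ψ_τ(W·|U + a| − b) − ψ_τ(W·|U + a|) ] = −f(0)·b + O((|a| + |b|)²). -/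
/-!
Conditioning on `W = w` turns the expected score increment into a window probability of `U`:
for `w > 0` it is `-P(|U + a| < b / w)`, for `w < 0` it is `P(0 < |U + a| ≤ b / w)`, so only the
half-line on which `b / w > 0` contributes. As `f` is Lipschitz near `0`, a window of radius `r`
around `-a` has mass `2 r f(0) + O(r (|a| + r))`, and `|W| ≥ min c₁ c₂` keeps `r = b / w` of
order `|b|`. Integrating in `w`, the reciprocal moments `±1/2` of `W` turn the leading term
`2 (b / w) f(0)` into `|b| f(0)` on the contributing half-line, that is `-f(0) b` in total.
-/

open MeasureTheory ProbabilityTheory Filter Asymptotics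

open Metric Set
open scoped NNReal

lemma measureReal_closedBall_of_nonpos {P : Measure ℝ} [NullSingletonClass P] (c : ℝ) {r : ℝ}
    (hr : r ≤ 0) : P.real (closedBall c r) = 0 := by
  have hsub : closedBall c r ⊆ {c} := fun x hx => dist_le_zero.1 ((mem_closedBall.1 hx).trans hr)
  rw [measureReal_def, measure_mono_null hsub (measure_singleton c), ENNReal.toReal_zero]

lemma integrable_measureReal_closedBall (P ν : Measure ℝ) [IsFiniteMeasure P] [IsFiniteMeasure ν]
    (c : ℝ) {r : ℝ → ℝ} (hr : Measurable r) :
    Integrable (fun w => P.real (closedBall c (r w))) ν := by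
  have hS : MeasurableSet {p : ℝ × ℝ | dist p.2 c ≤ r p.1} :=
    measurableSet_le (by fun_prop) (hr.comp measurable_fst)
  refine Integrable.of_bound
    (measurable_measure_prodMk_left hS).ennreal_toReal.aestronglyMeasurable (P.real univ)
    (ae_of_all _ fun w => ?_)
  rw [Real.norm_eq_abs, abs_of_nonneg measureReal_nonneg]
  exact measureReal_mono (subset_univ _)

lemma abs_withDensity_real_closedBall_sub_le {f : ℝ → ℝ} {K : ℝ≥0} {ε c r R : ℝ}
    (hf : ∀ x, 0 ≤ f x) (hK : LipschitzOnWith K f (ball 0 ε)) (hr : 0 ≤ r)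
    (hR : |c| + r ≤ R) (hRε : R < ε) :
    |(volume.withDensity fun x => ENNReal.ofReal (f x)).real (closedBall c r) - 2 * r * f 0|
      ≤ 2 * r * (K * R) := by
  have hsub : closedBall c r ⊆ ball 0 ε :=
    closedBall_subset_ball' (by rw [Real.dist_0_eq_abs]; linarith)
  have hint : IntegrableOn f (closedBall c r) :=
    (hK.continuousOn.mono hsub).integrableOn_compact (isCompact_closedBall c r)
  have hmass : (volume.withDensity fun x => ENNReal.ofReal (f x)).real (closedBall c r)
      = ∫ x in closedBall c r, f x := by
    rw [measureReal_def, withDensity_apply _ measurableSet_closedBall,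
      ← ofReal_integral_eq_lintegral_ofReal hint (ae_of_all _ hf),
      ENNReal.toReal_ofReal (setIntegral_nonneg measurableSet_closedBall fun x _ => hf x)]
  have hvol : volume.real (closedBall c r) = 2 * r := by
    rw [Real.closedBall_eq_Icc, Real.volume_real_Icc, max_eq_left (by linarith)]
    ring
  have hlip : ∀ x ∈ closedBall c r, ‖f x - f 0‖ ≤ K * R := fun x hx => by
    have hx0 : dist x 0 ≤ R := by
      linarith [dist_triangle x c 0, mem_closedBall.1 hx, Real.dist_0_eq_abs c]
    have h0 : (0 : ℝ) ∈ ball 0 ε := mem_ball_self (dist_nonneg.trans_lt (hx0.trans_lt hRε))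
    calc ‖f x - f 0‖ = dist (f x) (f 0) := (dist_eq_norm _ _).symm
      _ ≤ K * dist x 0 := hK.dist_le_mul x (hsub hx) 0 h0
      _ ≤ K * R := by gcongr
  calc _ = ‖∫ x in closedBall c r, (f x - f 0)‖ := by
        rw [integral_sub hint (integrableOn_const measure_closedBall_lt_top.ne),
          setIntegral_const, hvol, hmass, smul_eq_mul, Real.norm_eq_abs]
    _ ≤ K * R * volume.real (closedBall c r) :=
        norm_setIntegral_le_of_norm_le_const measure_closedBall_lt_top hlip
    _ = 2 * r * (K * R) := by rw [hvol]; ring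

lemma abs_setIntegral_sub_mul_le {α : Type*} [MeasurableSpace α] {ν : Measure α} {s : Set α}
    {g k : α → ℝ} {y E : ℝ} (hg : IntegrableOn g s ν) (hk : IntegrableOn k s ν)
    (h : ∀ᵐ w ∂ν.restrict s, |g w - k w * y| ≤ k w * E) :
    |∫ w in s, g w ∂ν - (∫ w in s, k w ∂ν) * y| ≤ (∫ w in s, k w ∂ν) * E := by
  have hky : IntegrableOn (fun w => k w * y) s ν := hk.mul_const y
  calc _ = |∫ w in s, (g w - k w * y) ∂ν| := by rw [integral_sub hg hky, integral_mul_const]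
    _ ≤ ∫ w in s, |g w - k w * y| ∂ν := abs_integral_le_integral_abs
    _ ≤ ∫ w in s, k w * E ∂ν := integral_mono_ae (hg.sub hky).abs (hk.mul_const E) h
    _ = (∫ w in s, k w ∂ν) * E := integral_mul_const _ _

lemma ProbabilityTheory.IndepFun.integral_comp_eq_integral_integral {Ω α β E : Type*}
    [MeasurableSpace Ω] [MeasurableSpace α] [MeasurableSpace β] [NormedAddCommGroup E]
    [NormedSpace ℝ E] {μ : Measure Ω} [IsFiniteMeasure μ] {X : Ω → α} {Y : Ω → β}
    (hXY : IndepFun X Y μ) (hX : Measurable X) (hY : Measurable Y) {g : α × β → E}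
    (hg : Integrable g ((μ.map X).prod (μ.map Y))) :
    ∫ ω, g (X ω, Y ω) ∂μ = ∫ x, ∫ y, g (x, y) ∂(μ.map Y) ∂(μ.map X) := by
  have hmap : μ.map (fun ω => (X ω, Y ω)) = (μ.map X).prod (μ.map Y) :=
    (indepFun_iff_map_prod_eq_prod_map_map hX.aemeasurable hY.aemeasurable).1 hXY
  rw [← integral_prod g hg, ← hmap, integral_map (hX.prodMk hY).aemeasurable (hmap ▸ hg.1)]

lemma ae_min_le_abs_of_measure_Ioo_eq_zero {ν : Measure ℝ} {c₁ c₂ : ℝ}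
    (h : ν (Ioo (-c₁) c₂) = 0) : ∀ᵐ w ∂ν, min c₁ c₂ ≤ |w| := by
  filter_upwards [measure_eq_zero_iff_ae_notMem.1 h] with w hw
  rw [mem_Ioo, not_and_or, not_lt, not_lt] at hw
  rcases hw with hw | hw
  · exact le_abs'.2 (Or.inl (by linarith [min_le_left c₁ c₂]))
  · exact le_abs'.2 (Or.inr ((min_le_right c₁ c₂).trans hw))

lemma measurable_scoreFn (τ : ℝ) : Measurable (scoreFn τ) :=
  measurable_const.sub (Measurable.ite measurableSet_Iio measurable_const measurable_const)

lemma abs_scoreFn_sub_scoreFn_le_one (τ x y : ℝ) : |scoreFn τ x - scoreFn τ y| ≤ 1 := by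
  unfold scoreFn
  split_ifs <;> norm_num

lemma scoreFn_sub_sub_scoreFn (τ x b : ℝ) :
    scoreFn τ (x - b) - scoreFn τ x = (Ico b 0).indicator 1 x - (Ico 0 b).indicator 1 x := by
  simp only [scoreFn, indicator_apply, mem_Ico, Pi.one_apply, sub_neg]
  split_ifs <;> grind

lemma integral_scoreFn_sub_sub_scoreFn {α : Type*} [MeasurableSpace α] (P : Measure α)
    [IsFiniteMeasure P] (τ b : ℝ) {φ : α → ℝ} (hφ : Measurable φ) :
    ∫ x, (scoreFn τ (φ x - b) - scoreFn τ (φ x)) ∂P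
      = P.real (φ ⁻¹' Ico b 0) - P.real (φ ⁻¹' Ico 0 b) := by
  have hIco : ∀ b' c' : ℝ, MeasurableSet (φ ⁻¹' Ico b' c') := fun _ _ => hφ measurableSet_Ico
  simp_rw [scoreFn_sub_sub_scoreFn, ← indicator_comp_right, Pi.one_comp]
  rw [integral_sub, integral_indicator_one (hIco _ _), integral_indicator_one (hIco _ _)]
  all_goals exact (integrable_indicator_iff (hIco _ _)).2 integrableOn_const

lemma integral_scoreFn_sub_sub_scoreFn_of_pos (P : Measure ℝ) [IsFiniteMeasure P]
    [NullSingletonClass P] (τ a b : ℝ) {w : ℝ} (hw : 0 < w) :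
    ∫ u, (scoreFn τ (w * |u + a| - b) - scoreFn τ (w * |u + a|)) ∂P
      = -P.real (closedBall (-a) (b / w)) := by
  have hlow : (fun u => w * |u + a|) ⁻¹' Ico b 0 = ∅ := by
    ext u
    simp only [mem_preimage, mem_Ico, mem_empty_iff_false, iff_false, not_and, not_lt]
    exact fun _ => by positivity
  have hup : (fun u => w * |u + a|) ⁻¹' Ico 0 b = ball (-a) (b / w) := by
    ext u
    simp only [mem_preimage, mem_Ico, mem_ball, Real.dist_eq, sub_neg_eq_add, lt_div_iff₀ hw]
    exact ⟨fun h => by linarith [h.2], fun h => ⟨by positivity, by linarith⟩⟩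
  rw [integral_scoreFn_sub_sub_scoreFn P τ b (by fun_prop), hlow, hup, measureReal_empty,
    zero_sub, Real.ball_eq_Ioo, Real.closedBall_eq_Icc, measureReal_congr Ioo_ae_eq_Icc]

lemma integral_scoreFn_sub_sub_scoreFn_of_neg (P : Measure ℝ) [IsFiniteMeasure P]
    [NullSingletonClass P] (τ a b : ℝ) {w : ℝ} (hw : w < 0) :
    ∫ u, (scoreFn τ (w * |u + a| - b) - scoreFn τ (w * |u + a|)) ∂P
      = P.real (closedBall (-a) (b / w)) := by
  have hlow : (fun u => w * |u + a|) ⁻¹' Ico b 0 = closedBall (-a) (b / w) \ {-a} := by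
    ext u
    simp only [mem_preimage, mem_Ico, Set.mem_sdiff, mem_closedBall, Real.dist_eq,
      sub_neg_eq_add, le_div_iff_of_neg hw, mem_singleton_iff, mul_neg_iff]
    simp [hw, hw.not_gt, abs_pos, add_eq_zero_iff_eq_neg, mul_comm]
  have hup : (fun u => w * |u + a|) ⁻¹' Ico 0 b ⊆ {-a} := by
    intro u hu
    have h0 : 0 ≤ w * |u + a| := hu.1
    have : |u + a| = 0 := le_antisymm (by nlinarith [abs_nonneg (u + a)]) (abs_nonneg _)
    rw [mem_singleton_iff]
    linarith [abs_eq_zero.1 this]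
  have hnull : P.real ((fun u => w * |u + a|) ⁻¹' Ico 0 b) = 0 := by
    rw [measureReal_def, measure_mono_null hup (measure_singleton _), ENNReal.toReal_zero]
  rw [integral_scoreFn_sub_sub_scoreFn P τ b (by fun_prop), hlow, hnull, sub_zero,
    measureReal_congr (sdiff_null_ae_eq_self (measure_singleton _))]

lemma integral_scoreFn_sub_sub_scoreFn_of_indepFun {Ω : Type*} [MeasurableSpace Ω]
    {μ : Measure Ω} [IsFiniteMeasure μ] {U W : Ω → ℝ} (hU : Measurable U) (hW : Measurable W)
    (hindep : IndepFun U W μ) [NullSingletonClass (μ.map U)] (hW0 : μ.map W {0} = 0)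
    (τ a b : ℝ) :
    ∫ ω, (scoreFn τ (W ω * |U ω + a| - b) - scoreFn τ (W ω * |U ω + a|)) ∂μ
      = ∫ w in Iio 0, (μ.map U).real (closedBall (-a) (b / w)) ∂(μ.map W)
        - ∫ w in Ioi 0, (μ.map U).real (closedBall (-a) (b / w)) ∂(μ.map W) := by
  have hg : Integrable (fun p : ℝ × ℝ =>
      scoreFn τ (p.1 * |p.2 + a| - b) - scoreFn τ (p.1 * |p.2 + a|)) ((μ.map W).prod (μ.map U)) :=
    Integrable.of_bound
      (((measurable_scoreFn τ).comp (by fun_prop)).sub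
        ((measurable_scoreFn τ).comp (by fun_prop))).aestronglyMeasurable 1
      (ae_of_all _ fun _ => abs_scoreFn_sub_scoreFn_le_one _ _ _)
  rw [hindep.symm.integral_comp_eq_integral_integral hW hU hg,
    ← integral_add_compl measurableSet_Iio hg.integral_prod_left, compl_Iio,
    setIntegral_congr_set (Ioi_ae_eq_Ici' hW0).symm,
    setIntegral_congr_fun measurableSet_Iio fun w hw =>
      integral_scoreFn_sub_sub_scoreFn_of_neg _ τ a b hw,
    setIntegral_congr_fun measurableSet_Ioi fun w hw =>
      integral_scoreFn_sub_sub_scoreFn_of_pos _ τ a b hw,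
    integral_neg, sub_eq_add_neg]

lemma abs_setIntegral_measureReal_closedBall_sub_le {f : ℝ → ℝ} {K : ℝ≥0} {ε : ℝ}
    (hf : ∀ x, 0 ≤ f x) (hK : LipschitzOnWith K f (ball 0 ε)) {P ν : Measure ℝ}
    (hP : P = volume.withDensity fun x => ENNReal.ofReal (f x)) [IsFiniteMeasure P]
    [IsFiniteMeasure ν] {s : Set ℝ} {a b c : ℝ} (hc : 0 < c)
    (hν : ∀ᵐ w ∂ν.restrict s, c ≤ |w| ∧ 0 ≤ b / w) (hmom : ∫ w in s, b * w⁻¹ ∂ν = |b| / 2)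
    (hab : |a| + |b| / c < ε) :
    |∫ w in s, P.real (closedBall (-a) (b / w)) ∂ν - |b| * f 0|
      ≤ |b| * (K * (|a| + |b| / c)) := by
  have hk : IntegrableOn (fun w => b * w⁻¹) s ν := by
    refine Integrable.of_bound (by fun_prop) (|b| / c) (hν.mono fun w hw => ?_)
    rw [Real.norm_eq_abs, abs_mul, abs_inv, ← div_eq_mul_inv]
    exact div_le_div_of_nonneg_left (abs_nonneg b) hc hw.1
  have hpt : ∀ᵐ w ∂ν.restrict s, |P.real (closedBall (-a) (b / w)) - b * w⁻¹ * (2 * f 0)|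
      ≤ b * w⁻¹ * (2 * (K * (|a| + |b| / c))) := by
    filter_upwards [hν] with w ⟨hcw, hbw⟩
    have hbw_le : b / w ≤ |b| / c := calc
      b / w ≤ |b / w| := le_abs_self _
      _ = |b| / |w| := abs_div b w
      _ ≤ |b| / c := div_le_div_of_nonneg_left (abs_nonneg b) hc hcw
    have := hP ▸ abs_withDensity_real_closedBall_sub_le (c := -a) hf hK hbw
      (by rw [abs_neg]; linarith) hab
    convert this using 1 <;> ring_nf
  have := abs_setIntegral_sub_mul_le
    (integrable_measureReal_closedBall P ν (-a) (r := fun w => b / w) (by fun_prop)).integrableOn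
    hk hpt
  rw [hmom] at this
  convert this using 1 <;> ring_nf

lemma abs_integral_measureReal_closedBall_sub_add_le {f : ℝ → ℝ} {K : ℝ≥0} {ε : ℝ}
    (hf : ∀ x, 0 ≤ f x) (hK : LipschitzOnWith K f (ball 0 ε)) {P ν : Measure ℝ}
    (hP : P = volume.withDensity fun x => ENNReal.ofReal (f x)) [IsFiniteMeasure P]
    [NullSingletonClass P] [IsFiniteMeasure ν] {c : ℝ} (hc : 0 < c) (hν : ∀ᵐ w ∂ν, c ≤ |w|)
    (hpos : ∫ w in Ioi 0, w⁻¹ ∂ν = 1 / 2) (hneg : ∫ w in Iio 0, w⁻¹ ∂ν = -(1 / 2))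
    {a b : ℝ} (hab : |a| + |b| / c < ε) :
    |∫ w in Iio 0, P.real (closedBall (-a) (b / w)) ∂ν
        - ∫ w in Ioi 0, P.real (closedBall (-a) (b / w)) ∂ν + f 0 * b|
      ≤ |b| * (K * (|a| + |b| / c)) := by
  rcases le_total 0 b with hb | hb
  · have hIio : ∫ w in Iio 0, P.real (closedBall (-a) (b / w)) ∂ν = 0 :=
      setIntegral_eq_zero_of_forall_eq_zero fun w hw =>
        measureReal_closedBall_of_nonpos _ (div_nonpos_of_nonneg_of_nonpos hb (le_of_lt hw))
    have := abs_setIntegral_measureReal_closedBall_sub_le hf hK hP hc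
      ((ae_restrict_iff' measurableSet_Ioi).2 (hν.mono fun w hw hw0 =>
        ⟨hw, div_nonneg hb (le_of_lt hw0)⟩))
      (by rw [integral_const_mul, hpos, abs_of_nonneg hb]; ring) hab
    rw [hIio, ← abs_neg]
    rw [abs_of_nonneg hb] at this ⊢
    convert this using 2
    ring
  · have hIoi : ∫ w in Ioi 0, P.real (closedBall (-a) (b / w)) ∂ν = 0 :=
      setIntegral_eq_zero_of_forall_eq_zero fun w hw =>
        measureReal_closedBall_of_nonpos _ (div_nonpos_of_nonpos_of_nonneg hb (le_of_lt hw))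
    have := abs_setIntegral_measureReal_closedBall_sub_le hf hK hP hc
      ((ae_restrict_iff' measurableSet_Iio).2 (hν.mono fun w hw hw0 =>
        ⟨hw, div_nonneg_of_nonpos hb (le_of_lt hw0)⟩))
      (by rw [integral_const_mul, hneg, abs_of_nonpos hb]; ring) hab
    rw [hIoi]
    rw [abs_of_nonpos hb] at this ⊢
    convert this using 2
    ring

theorem wild_bootstrap_expansion_score_general
    {Ω : Type*} [MeasurableSpace Ω] (μ : Measure Ω) [IsProbabilityMeasure μ]
    (τ : ℝ)
    (U W : Ω → ℝ) (hU : Measurable U) (hW : Measurable W)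
    (hindep : IndepFun U W μ)
    (f : ℝ → ℝ) (hf_nonneg : ∀ x, 0 ≤ f x)
    (hf_density : Measure.map U μ
      = MeasureTheory.volume.withDensity (fun x => ENNReal.ofReal (f x)))
    (hf_lip : ∃ ε > (0 : ℝ), ∃ K : NNReal, LipschitzOnWith K f (Metric.ball (0 : ℝ) ε))
    (c₁ c₂ : ℝ) (hc₁ : 0 < c₁) (hc₂ : 0 < c₂)
    (hsupp : Measure.map W μ (Set.Ioo (-c₁) c₂) = 0)
    (hpos : ∫ w in Set.Ioi (0 : ℝ), w⁻¹ ∂(Measure.map W μ) = 1 / 2)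
    (hneg : ∫ w in Set.Iio (0 : ℝ), w⁻¹ ∂(Measure.map W μ) = -(1 / 2)) :
    (fun q : ℝ × ℝ =>
        (∫ ω, (scoreFn τ (W ω * |U ω + q.1| - q.2)
            - scoreFn τ (W ω * |U ω + q.1|)) ∂μ)
          + f 0 * q.2)
      =O[nhds ((0 : ℝ), (0 : ℝ))] (fun q => (|q.1| + |q.2|) ^ 2) := by
  obtain ⟨ε, hε, K, hK⟩ := hf_lip
  have : NullSingletonClass (μ.map U) :=
    ⟨fun x => hf_density ▸ withDensity_absolutelyContinuous _ _ (measure_singleton x)⟩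
  have hν := ae_min_le_abs_of_measure_Ioo_eq_zero hsupp
  set c := min c₁ c₂
  have hc : 0 < c := lt_min hc₁ hc₂
  have hW0 : μ.map W {0} = 0 := measure_mono_null (t := Ioo (-c₁) c₂)
    (singleton_subset_iff.2 ⟨neg_lt_zero.2 hc₁, hc₂⟩) hsupp
  have hsmall : ∀ᶠ q : ℝ × ℝ in nhds (0, 0), |q.1| + |q.2| / c < ε :=
    ContinuousAt.eventually_lt (by fun_prop) continuousAt_const (by simpa using hε)
  refine IsBigO.of_bound (K * (1 + c⁻¹)) ?_
  filter_upwards [hsmall] with ⟨a, b⟩ hab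
  rw [integral_scoreFn_sub_sub_scoreFn_of_indepFun hU hW hindep hW0, Real.norm_eq_abs,
    Real.norm_eq_abs, abs_of_nonneg (sq_nonneg (|a| + |b|))]
  have hab_sq : |a| * |b| ≤ (|a| + |b|) ^ 2 := by nlinarith [abs_nonneg a, abs_nonneg b]
  have hb_sq : |b| ^ 2 ≤ (|a| + |b|) ^ 2 := by gcongr; linarith [abs_nonneg a]
  calc _ ≤ |b| * (K * (|a| + |b| / c)) :=
        abs_integral_measureReal_closedBall_sub_add_le hf_nonneg hK hf_density hc hν hpos hneg hab
    _ = K * (|a| * |b| + c⁻¹ * |b| ^ 2) := by ring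
    _ ≤ K * ((|a| + |b|) ^ 2 + c⁻¹ * (|a| + |b|) ^ 2) := by gcongr
    _ = K * (1 + c⁻¹) * (|a| + |b|) ^ 2 := by ring

/-- First-order expansion of the expected wild-bootstrap score increment
(part 2 of Lemma S.3): if `U` has a density `f` which is bounded, Lipschitz near `0`
and bounded away from `0` near `0`, and `W` is independent of `U` with distribution
supported away from `0` whose signed reciprocal moments on the two half-lines are
`±1/2`, then as `(a, b) → (0, 0)`,
`E[ψ_τ(W|U + a| − b) − ψ_τ(W|U + a|)] = −f(0)·b + O((|a| + |b|)²)`. -/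
theorem wild_bootstrap_expansion_score
    {Ω : Type*} [MeasurableSpace Ω] (μ : Measure Ω) [IsProbabilityMeasure μ]
    (τ : ℝ) (hτ : τ ∈ Set.Ioo (0 : ℝ) 1)
    (U W : Ω → ℝ) (hU : Measurable U) (hW : Measurable W)
    (hindep : IndepFun U W μ)
    (f : ℝ → ℝ) (hf_nonneg : ∀ x, 0 ≤ f x)
    (hf_density : Measure.map U μ
      = MeasureTheory.volume.withDensity (fun x => ENNReal.ofReal (f x)))
    (hf_bdd : ∃ C : ℝ, ∀ x, f x ≤ C)
    (hf_lip : ∃ ε > (0 : ℝ), ∃ K : NNReal, LipschitzOnWith K f (Metric.ball (0 : ℝ) ε))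
    (hf_pos : ∃ δ > (0 : ℝ), ∃ c > (0 : ℝ), ∀ x ∈ Metric.ball (0 : ℝ) δ, c ≤ f x)
    (c₁ c₂ : ℝ) (hc₁ : 0 < c₁) (hc₂ : 0 < c₂)
    (hsupp : Measure.map W μ (Set.Ioo (-c₁) c₂) = 0)
    (hpos : ∫ w in Set.Ioi (0 : ℝ), w⁻¹ ∂(Measure.map W μ) = 1 / 2)
    (hneg : ∫ w in Set.Iio (0 : ℝ), w⁻¹ ∂(Measure.map W μ) = -(1 / 2)) :
    (fun q : ℝ × ℝ =>
        (∫ ω, (scoreFn τ (W ω * |U ω + q.1| - q.2)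
            - scoreFn τ (W ω * |U ω + q.1|)) ∂μ)
          + f 0 * q.2)
      =O[nhds ((0 : ℝ), (0 : ℝ))] (fun q => (|q.1| + |q.2|) ^ 2) :=
  wild_bootstrap_expansion_score_general μ τ U W hU hW hindep f hf_nonneg hf_density hf_lip c₁ c₂
    hc₁ hc₂ hsupp hpos hneg
end

section
/- Fix τ ∈ (0,1), λ ≥ 0, integers p, N, T ≥ 1, responses y_{it} ∈ ℝ and covariates x_{it} ∈ ℝ^p. Suppose θ̂ = (β̂, α̂) ∈ ℝ^p × ℝ^N minimizes the objective (β, α) ↦ Σ_{i=1}^N Σ_{t=1}^T ρ_τ(y_{it} − x_{it}'β − α_i) + λ Σ_{i=1}^N |α_i|, and that the observations are in general position at θ̂, in the sense that at most p + N of the NT + N quantities consisting of the residuals y_{it} − x_{it}'β̂ − α̂_i (over all (i,t)) together with the fitted effects α̂_i (over all i) are exactly zero. Then ‖ Σ_{i=1}^N Σ_{t=1}^T x_{it} · ψ_τ(y_{it} − x_{it}'β̂ − α̂_i) ‖ ≤ (p + N)·( max_{i,t} ‖x_{it}‖ + 1 ), where ‖·‖ is the Euclidean norm. -/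
/-!
Perturb `β̂` along the score `S = Σₖ ψ_τ(rₖ) xₖ`, keeping `α̂` fixed so that the penalty does
not move. For a small enough step every nonzero residual keeps its sign, so its check loss is
exactly linear in the step with slope `-ψ_τ(rₖ)⟪xₖ, S⟫`; a zero residual costs at most
`|⟪xₖ, S⟫|` more per unit step. Minimality then gives
`‖S‖² ≤ Σ_{rₖ = 0} |⟪xₖ, S⟫| ≤ ‖S‖ Σ_{rₖ = 0} ‖xₖ‖`, and general position leaves at most `p + N`
zero residuals.
-/

open scoped RealInnerProductSpace

open Filter Topology Finset

lemma checkFn_le_mul_add_abs (τ h : ℝ) : checkFn τ h ≤ τ * h + |h| := by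
  unfold checkFn
  split_ifs with hh
  · rw [abs_of_neg hh]; linarith
  · rw [abs_of_nonneg (not_lt.mp hh)]; linarith [abs_nonneg h]

lemma eventually_checkFn_add_eq {u : ℝ} (τ : ℝ) (hu : u ≠ 0) :
    ∀ᶠ h in 𝓝 0, checkFn τ (u + h) = checkFn τ u + scoreFn τ u * h := by
  have hsign : ∀ᶠ h in 𝓝 (0 : ℝ), (u + h < 0 ↔ u < 0) := by
    rcases hu.lt_or_gt with hneg | hpos
    · filter_upwards [eventually_lt_nhds (neg_pos.2 hneg)] with h hh
      exact iff_of_true (by linarith) hneg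
    · filter_upwards [eventually_gt_nhds (neg_neg_iff_pos.2 hpos)] with h hh
      exact iff_of_false (not_lt.2 (by linarith)) hpos.not_gt
  filter_upwards [hsign] with h hh
  simp only [checkFn, scoreFn, hh]
  ring

lemma eventually_checkFn_add_le (τ u : ℝ) :
    ∀ᶠ h in 𝓝 0, checkFn τ (u + h) ≤
      checkFn τ u + scoreFn τ u * h + if u = 0 then |h| else 0 := by
  rcases eq_or_ne u 0 with rfl | hu
  · refine Eventually.of_forall fun h => ?_
    simpa [checkFn, scoreFn] using checkFn_le_mul_add_abs τ h
  · filter_upwards [eventually_checkFn_add_eq τ hu] with h hh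
    simp [hh, hu]

lemma exists_pos_forall_checkFn_sub_le {ι : Type*} [Finite ι] (τ : ℝ) (r a : ι → ℝ) :
    ∃ ε > 0, ∀ k, checkFn τ (r k - ε * a k) ≤
      checkFn τ (r k) - ε * (scoreFn τ (r k) * a k) + ε * if r k = 0 then |a k| else 0 := by
  have hsmall (k : ι) : Tendsto (fun ε : ℝ => -(ε * a k)) (𝓝[>] 0) (𝓝 0) := by
    have hcont : Continuous fun ε : ℝ => -(ε * a k) := by fun_prop
    simpa using (hcont.tendsto 0).mono_left nhdsWithin_le_nhds
  have hall : ∀ᶠ ε in 𝓝[>] (0 : ℝ), 0 < ε ∧ ∀ k, checkFn τ (r k + -(ε * a k)) ≤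
      checkFn τ (r k) + scoreFn τ (r k) * -(ε * a k) + if r k = 0 then |-(ε * a k)| else 0 :=
    eventually_mem_nhdsWithin.and
      (eventually_all.2 fun k => (hsmall k).eventually (eventually_checkFn_add_le τ (r k)))
  obtain ⟨ε, hε, hk⟩ := hall.exists
  refine ⟨ε, hε, fun k => ?_⟩
  have := hk k
  rw [abs_neg, abs_mul, abs_of_pos hε, ← sub_eq_add_neg] at this
  split_ifs at this ⊢ <;> linarith

theorem norm_sum_scoreFn_smul_le_of_forall_le {ι E : Type*} [Fintype ι] [NormedAddCommGroup E]
    [InnerProductSpace ℝ E] (τ : ℝ) (r : ι → ℝ) (x : ι → E)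
    (hmin : ∀ v : E, ∑ k, checkFn τ (r k) ≤ ∑ k, checkFn τ (r k - ⟪x k, v⟫)) :
    ‖∑ k, scoreFn τ (r k) • x k‖ ≤ ∑ k with r k = 0, ‖x k‖ := by
  set S := ∑ k, scoreFn τ (r k) • x k
  obtain ⟨ε, hε, hstep⟩ := exists_pos_forall_checkFn_sub_le τ r fun k => ⟪x k, S⟫
  have hS : ‖S‖ ^ 2 = ∑ k, scoreFn τ (r k) * ⟪x k, S⟫ := by
    simp only [S, ← real_inner_self_eq_norm_sq, sum_inner, real_inner_smul_left]
  have hfirst : ‖S‖ ^ 2 ≤ ∑ k with r k = 0, |⟪x k, S⟫| := by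
    have hsum := hmin (ε • S)
    simp only [real_inner_smul_right] at hsum
    replace hsum := hsum.trans (sum_le_sum fun k _ => hstep k)
    simp only [sum_add_distrib, sum_sub_distrib, ← mul_sum, ← sum_filter] at hsum
    rw [hS]
    nlinarith
  have hsecond : ∑ k with r k = 0, |⟪x k, S⟫| ≤ (∑ k with r k = 0, ‖x k‖) * ‖S‖ := by
    rw [sum_mul]
    exact sum_le_sum fun k _ => abs_real_inner_le_norm _ _
  rcases (norm_nonneg S).eq_or_lt with h0 | hpos
  · rw [← h0]; exact sum_nonneg fun k _ => norm_nonneg _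
  · nlinarith

theorem penalized_qr_score_bound_beta_general
    (τ : ℝ) (lam : ℝ)
    (p N T : ℕ) (hN : 1 ≤ N) (hT : 1 ≤ T)
    (y : Fin N → Fin T → ℝ) (x : Fin N → Fin T → EuclideanSpace ℝ (Fin p))
    (βhat : EuclideanSpace ℝ (Fin p)) (αhat : Fin N → ℝ)
    (hmin : ∀ (β : EuclideanSpace ℝ (Fin p)) (α : Fin N → ℝ),
      (∑ i, ∑ t, checkFn τ (y i t - ⟪x i t, βhat⟫ - αhat i)) + lam * ∑ i, |αhat i|
        ≤ (∑ i, ∑ t, checkFn τ (y i t - ⟪x i t, β⟫ - α i)) + lam * ∑ i, |α i|)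
    (hgen : Set.ncard {it : Fin N × Fin T |
          y it.1 it.2 - ⟪x it.1 it.2, βhat⟫ - αhat it.1 = 0}
        + Set.ncard {i : Fin N | αhat i = 0} ≤ p + N) :
    ‖∑ i, ∑ t, scoreFn τ (y i t - ⟪x i t, βhat⟫ - αhat i) • x i t‖
      ≤ (p + N : ℝ) *
        ((Finset.univ.sup' ⟨(⟨0, hN⟩, ⟨0, hT⟩), Finset.mem_univ _⟩
            fun it : Fin N × Fin T => ‖x it.1 it.2‖) + 1) := by
  set M := Finset.univ.sup' ⟨(⟨0, hN⟩, ⟨0, hT⟩), Finset.mem_univ _⟩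
    fun it : Fin N × Fin T => ‖x it.1 it.2‖
  set r : Fin N × Fin T → ℝ := fun it => y it.1 it.2 - ⟪x it.1 it.2, βhat⟫ - αhat it.1
  have hM (it : Fin N × Fin T) : ‖x it.1 it.2‖ ≤ M :=
    le_sup' (fun it : Fin N × Fin T => ‖x it.1 it.2‖) (mem_univ it)
  have hcard : (#{it | r it = 0} : ℝ) ≤ p + N := by
    have := (Nat.le_add_right _ _).trans hgen
    rw [← Set.ncard_coe_finset, coe_filter_univ]
    exact_mod_cast this
  have hopt : ∀ v, ∑ it, checkFn τ (r it) ≤ ∑ it, checkFn τ (r it - ⟪x it.1 it.2, v⟫) := by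
    intro v
    have := le_of_add_le_add_right (hmin (βhat + v) αhat)
    simp only [inner_add_right, ← Fintype.sum_prod_type'] at this
    convert this using 3 with it
    ring
  calc ‖∑ i, ∑ t, scoreFn τ (r (i, t)) • x i t‖
      = ‖∑ it, scoreFn τ (r it) • x it.1 it.2‖ := by rw [Fintype.sum_prod_type]
    _ ≤ ∑ it with r it = 0, ‖x it.1 it.2‖ := norm_sum_scoreFn_smul_le_of_forall_le τ r _ hopt
    _ ≤ #{it | r it = 0} * M := by simpa using sum_le_card_nsmul _ _ M fun it _ => hM it
    _ ≤ (p + N) * (M + 1) := by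
      gcongr
      · linarith [(norm_nonneg _).trans (hM (⟨0, hN⟩, ⟨0, hT⟩))]
      · linarith

/-- Gradient-condition bound for the penalized panel quantile regression estimator
(first assertion of Lemma S.2): if `(β̂, α̂)` minimizes the penalized objective and the
observations are in general position (at most `p + N` of the `NT + N` residuals and
fitted effects vanish), then
`‖Σᵢ Σₜ x_{it} ψ_τ(y_{it} − x_{it}'β̂ − α̂ᵢ)‖ ≤ (p + N)(max_{i,t} ‖x_{it}‖ + 1)`. -/
theorem penalized_qr_score_bound_beta
    (τ : ℝ) (hτ : τ ∈ Set.Ioo (0 : ℝ) 1) (lam : ℝ) (hlam : 0 ≤ lam)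
    (p N T : ℕ) (hp : 1 ≤ p) (hN : 1 ≤ N) (hT : 1 ≤ T)
    (y : Fin N → Fin T → ℝ) (x : Fin N → Fin T → EuclideanSpace ℝ (Fin p))
    (βhat : EuclideanSpace ℝ (Fin p)) (αhat : Fin N → ℝ)
    (hmin : ∀ (β : EuclideanSpace ℝ (Fin p)) (α : Fin N → ℝ),
      (∑ i, ∑ t, checkFn τ (y i t - ⟪x i t, βhat⟫ - αhat i)) + lam * ∑ i, |αhat i|
        ≤ (∑ i, ∑ t, checkFn τ (y i t - ⟪x i t, β⟫ - α i)) + lam * ∑ i, |α i|)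
    (hgen : Set.ncard {it : Fin N × Fin T |
          y it.1 it.2 - ⟪x it.1 it.2, βhat⟫ - αhat it.1 = 0}
        + Set.ncard {i : Fin N | αhat i = 0} ≤ p + N) :
    ‖∑ i, ∑ t, scoreFn τ (y i t - ⟪x i t, βhat⟫ - αhat i) • x i t‖
      ≤ (p + N : ℝ) *
        ((Finset.univ.sup' ⟨(⟨0, hN⟩, ⟨0, hT⟩), Finset.mem_univ _⟩
            fun it : Fin N × Fin T => ‖x it.1 it.2‖) + 1) :=
  penalized_qr_score_bound_beta_general τ lam p N T hN hT y x βhat αhat hmin hgen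
end
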